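/- arXiv:1206.5863 — 4 statements merged into one kernel-verified Lean document; each statement's English description precedes it below -/
import Mathlib

section
/- If any two distinct codewords of a code C ⊆ S^l agree in at most t-1 coordinates, and l > c(t-1), then C is a c-frameproof code. -/
open Finset

/-- The descendant set of a set of words. -/
def desc {l : ℕ} {F : Type*} (P : Set (Fin l → F)) : Set (Fin l → F) :=
  {x | ∀ i : Fin l, ∃ y ∈ P, x i = y i}

/-- `C` is a `c`-frameproof code of length `l`. -/
def IsFrameproof {l : ℕ} {F : Type*} (c : ℕ) (C : Set (Fin l → F)) : Prop :=
  ∀ P : Finset (Fin l → F), ↑P ⊆ C → P.card ≤ c → desc ↑P ∩ C = ↑P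

/-- Property P(t) with special element `inf`: each codeword has at most `t-1`
coordinates equal to `inf`, and distinct codewords cannot agree in `t`
coordinates all of whose values are not `inf`. -/
def PropertyP {l : ℕ} {S : Type*} [DecidableEq S] (t : ℕ) (inf : S)
    (C : Set (Fin l → S)) : Prop :=
  (∀ x ∈ C, (Finset.univ.filter fun i => x i = inf).card ≤ t - 1) ∧
  ∀ x ∈ C, ∀ y ∈ C, ∀ I : Finset (Fin l), t ≤ I.card →
    (∀ i ∈ I, x i = y i ∧ x i ≠ inf) → x = y

/-- `A` is an orthogonal array of strength `t` and index 1: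
in any `t` distinct rows, every `t`-tuple appears exactly once as a column. -/
def IsOA {l N : ℕ} {S : Type*} (t : ℕ) (A : Fin l → Fin N → S) : Prop :=
  ∀ rows : Fin t → Fin l, Function.Injective rows →
    ∀ v : Fin t → S, ∃! j : Fin N, ∀ k : Fin t, A (rows k) j = v k

/-! A codeword `x ∉ P` that descends from `P` inherits each of its `l` coordinates from some
parent, so it agrees with the `|P| ≤ c` parents in at least `l > c(t-1)` coordinates in total,
and hence in more than `t - 1` coordinates with one of them. -/

section Descendants

variable {l : ℕ} {F : Type*}

theorem subset_desc (P : Set (Fin l → F)) : P ⊆ desc P :=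
  fun y hy _ => ⟨y, hy, rfl⟩

theorem card_le_sum_card_agree_of_mem_desc [DecidableEq F] {P : Finset (Fin l → F)}
    {x : Fin l → F} (hx : x ∈ desc (P : Set (Fin l → F))) :
    l ≤ ∑ y ∈ P, #{i | x i = y i} := by
  have hcover : (univ : Finset (Fin l)) ⊆ P.biUnion fun y => {i | x i = y i} := by
    intro i _
    obtain ⟨y, hy, hxy⟩ := hx i
    exact mem_biUnion.2 ⟨y, hy, mem_filter.2 ⟨mem_univ i, hxy⟩⟩
  calc l = #(univ : Finset (Fin l)) := (card_fin l).symm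
    _ ≤ #(P.biUnion fun y => {i | x i = y i}) := card_le_card hcover
    _ ≤ ∑ y ∈ P, #{i | x i = y i} := card_biUnion_le

end Descendants

/-- If any two distinct codewords agree in at most `t-1` coordinates and
`l > c*(t-1)`, then the code is `c`-frameproof. -/
theorem frameproof_of_agreement {l t c : ℕ} {S : Type*} [DecidableEq S]
    (C : Set (Fin l → S))
    (h : ∀ x ∈ C, ∀ y ∈ C, x ≠ y →
      (Finset.univ.filter fun i => x i = y i).card ≤ t - 1)
    (hlc : c * (t - 1) < l) : IsFrameproof c C := by
  intro P hPC hPc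
  refine Set.Subset.antisymm (fun x ⟨hxd, hxC⟩ => ?_) fun x hx => ⟨subset_desc _ hx, hPC hx⟩
  by_contra hxP
  have hagree : ∀ y ∈ P, #{i | x i = y i} ≤ t - 1 := fun y hy =>
    h x hxC y (hPC hy) fun hxy => hxP (hxy ▸ hy)
  have hl : l ≤ c * (t - 1) :=
    calc l ≤ ∑ y ∈ P, #{i | x i = y i} := card_le_sum_card_agree_of_mem_desc hxd
      _ ≤ #P * (t - 1) := sum_le_card_nsmul P _ _ hagree
      _ ≤ c * (t - 1) := Nat.mul_le_mul_right _ hPc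
  omega
end

section
/- Under the hypotheses of the recursive construction (Lemma on Property P(t)), the resulting c-frameproof code of length l over the alphabet of size q = (s-1)m+1 also satisfies Property P(t), with special element (∞,∞). -/
open Finset

/-! The new codeword built from `y ∈ C` and a polynomial `f` of degree `< t` carries `y` in its
first components and the values of `f` at the points `α i` of the projective line in its second.
Two such words agreeing in `t` non-special coordinates have the same `y` by Property P(t) of `C`,
and then the same `f`, since a nonzero polynomial of degree `< t` has fewer than `t` projective
zeros. As every word of `C` has at least `l - (t - 1) ≥ t` non-special coordinates, distinct pairs
give distinct words, whence the size `M m^t`; frameproofness follows from Property P(t) alone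
because `l ≥ c (t - 1) + t`. -/

open Polynomial

section Frameproof

variable {l c : ℕ} {Q : Type*}

theorem isFrameproof_empty : IsFrameproof c (∅ : Set (Fin l → Q)) := by
  intro P hP _
  rw [Set.subset_empty_iff, Finset.coe_eq_empty] at hP
  simp [hP]

theorem IsFrameproof.eq_empty {C : Set (Fin 0 → Q)} (hC : IsFrameproof c C) : C = ∅ := by
  simpa [desc] using hC ∅ (by simp) (Nat.zero_le c)

end Frameproof

namespace PropertyP

variable {l t : ℕ} {S : Type*} [DecidableEq S] {inf : S} {C : Set (Fin l → S)}

theorem le_card_nonspecial (hP : PropertyP t inf C) {x : Fin l → S} (hx : x ∈ C) :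
    l ≤ #{i | x i ≠ inf} + (t - 1) := by
  have hsplit := Finset.card_filter_add_card_filter_not (s := univ) (fun i => x i = inf)
  rw [card_univ, Fintype.card_fin] at hsplit
  have := hP.1 x hx
  simp only [ne_eq]
  omega

/-- A word in the descendant set of `P` borrows each of its `≥ l - (t - 1)` non-special letters
from one of the `≤ c` codewords of `P`; by pigeonhole some codeword supplies `t` of them. -/
theorem isFrameproof {c : ℕ} (hP : PropertyP t inf C) (hl : c * (t - 1) + t ≤ l) (hl0 : 0 < l) :
    IsFrameproof c C := by
  intro P hPC hPc
  refine subset_antisymm ?_ fun x hx => ⟨fun i => ⟨x, hx, rfl⟩, hPC hx⟩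
  rintro x ⟨hxd, hxC⟩
  choose g hgP hgx using hxd
  have hN := hP.le_card_nonspecial hxC
  have hcard : #P * (t - 1) < #{i | x i ≠ inf} := by
    rcases Nat.eq_zero_or_pos t with rfl | ht
    · simp only [zero_tsub, mul_zero, add_zero] at hN ⊢
      omega
    · have := Nat.mul_le_mul_right (t - 1) hPc
      omega
  obtain ⟨y, hyP, hy⟩ :=
    exists_lt_card_fiber_of_mul_lt_card_of_maps_to (fun i _ => hgP i) hcard
  have hxy : x = y := by
    refine hP.2 x hxC y (hPC hyP) {i | x i ≠ inf ∧ g i = y}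
      (by rw [filter_filter] at hy; omega) fun i hi => ?_
    rw [mem_filter] at hi
    exact ⟨(hgx i).trans (by rw [hi.2.2]), hi.2.1⟩
  exact hxy ▸ hyP

theorem image_comp {T : Type*} [DecidableEq T] (hP : PropertyP t inf C) {e : S → T}
    (he : Function.Injective e) : PropertyP t (e inf) ((e ∘ ·) '' C) := by
  constructor
  · rintro _ ⟨x, hx, rfl⟩
    simpa [he.eq_iff] using hP.1 x hx
  · rintro _ ⟨x, hx, rfl⟩ _ ⟨y, hy, rfl⟩ I hI hxy
    refine congrArg (e ∘ ·) (hP.2 x hx y hy I hI fun i hi => ?_)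
    simpa [he.eq_iff] using hxy i hi

end PropertyP

theorem Polynomial.mem_degreeLT_pred {R : Type*} [Semiring R] {t : ℕ} {f : R[X]}
    (hf : f ∈ degreeLT R t) (h : f.coeff (t - 1) = 0) : f ∈ degreeLT R (t - 1) := by
  rw [mem_degreeLT, degree_lt_iff_coeff_zero] at hf ⊢
  intro n hn
  rcases hn.eq_or_lt with rfl | hn
  · exact h
  · exact hf n (by omega)

section ProjectiveEvaluation

variable {F : Type*} [Field F] {t : ℕ}

/-- `Option F` models the projective line `F ∪ {∞}`, with `none = ∞`; a polynomial of
degree `< t` takes at `∞` the value of its coefficient of `X ^ (t - 1)`. -/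
def projEval (t : ℕ) (f : F[X]) : Option F → F
  | none => f.coeff (t - 1)
  | some a => f.eval a

theorem projEval_sub (f g : F[X]) (x : Option F) :
    projEval t (f - g) x = projEval t f x - projEval t g x := by
  cases x <;> simp [projEval]

/-- If `∞` is among the zeros, the top coefficient vanishes and the degree drops by one,
matching the one finite zero fewer. -/
theorem eq_zero_of_projEval_eq_zero {f : F[X]} (hf : f ∈ degreeLT F t) (A : Finset (Option F))
    (hA : t ≤ #A) (h : ∀ x ∈ A, projEval t f x = 0) : f = 0 := by
  have hroots : ∀ a ∈ A.eraseNone, f.eval a = 0 := fun a ha =>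
    h (some a) (mem_eraseNone.1 ha)
  by_cases hinf : none ∈ A
  · have hf' := mem_degreeLT_pred hf (h none hinf)
    rw [mem_degreeLT] at hf'
    refine eq_zero_of_degree_lt_of_eval_finset_eq_zero _ (hf'.trans_le ?_) hroots
    rw [card_eraseNone_of_mem hinf]
    exact_mod_cast Nat.sub_le_sub_right hA 1
  · rw [mem_degreeLT] at hf
    refine eq_zero_of_degree_lt_of_eval_finset_eq_zero _ (hf.trans_le ?_) hroots
    rw [card_eraseNone_of_not_mem hinf]
    exact_mod_cast hA

theorem eq_of_projEval_eq {l : ℕ} (α : Fin l ↪ Option F) {f g : F[X]} (hf : f ∈ degreeLT F t)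
    (hg : g ∈ degreeLT F t) (I : Finset (Fin l)) (hI : t ≤ #I)
    (h : ∀ i ∈ I, projEval t f (α i) = projEval t g (α i)) : f = g := by
  refine sub_eq_zero.1 (eq_zero_of_projEval_eq_zero (sub_mem hf hg) (I.map α) (by simpa) ?_)
  simp only [mem_map]
  rintro _ ⟨i, hi, rfl⟩
  rw [projEval_sub, h i hi, sub_self]

end ProjectiveEvaluation

section RecursiveConstruction

variable {S : Type*} [DecidableEq S] (inf : S) {F : Type*}

/-- The letter `(a, b)` of the new alphabet `((S \ {∞}) × F) ∪ {(∞, ∞)}`, where `none` is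
`(∞, ∞)` and absorbs every `b` when `a = ∞`. -/
def liftLetter (a : S) (b : F) : Option ({a : S // a ≠ inf} × F) :=
  if h : a = inf then none else some (⟨a, h⟩, b)

variable {inf}

theorem liftLetter_eq_none {a : S} {b : F} : liftLetter inf a b = none ↔ a = inf := by
  unfold liftLetter
  split_ifs with h <;> simp [h]

theorem liftLetter_eq_liftLetter {a a' : S} {b b' : F} :
    liftLetter inf a b = liftLetter inf a' b' ↔ a = a' ∧ (a ≠ inf → b = b') := by
  unfold liftLetter
  by_cases h : a = inf <;> by_cases h' : a' = inf <;> simp [h, h']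
  grind

theorem card_liftLetter_alphabet [Fintype S] [Fintype F] :
    Fintype.card (Option ({a : S // a ≠ inf} × F)) =
      (Fintype.card S - 1) * Fintype.card F + 1 := by
  rw [Fintype.card_option, Fintype.card_prod, Fintype.card_subtype_compl,
    Fintype.card_subtype_eq]

variable [Field F] (inf) {l : ℕ} (t : ℕ) (α : Fin l ↪ Option F)

def recursiveWord (y : Fin l → S) (f : F[X]) (i : Fin l) : Option ({a : S // a ≠ inf} × F) :=
  liftLetter inf (y i) (projEval t f (α i))

def recursiveCode (C : Set (Fin l → S)) : Set (Fin l → Option ({a : S // a ≠ inf} × F)) :=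
  (fun p : (Fin l → S) × degreeLT F t => recursiveWord inf t α p.1 p.2) '' (C ×ˢ Set.univ)

variable {inf t α}

theorem recursiveWord_eq_none {y : Fin l → S} {f : F[X]} {i : Fin l} :
    recursiveWord inf t α y f i = none ↔ y i = inf :=
  liftLetter_eq_none

theorem recursiveWord_eq_recursiveWord {y y' : Fin l → S} {f f' : F[X]} {i : Fin l} :
    recursiveWord inf t α y f i = recursiveWord inf t α y' f' i ↔
      y i = y' i ∧ (y i ≠ inf → projEval t f (α i) = projEval t f' (α i)) :=
  liftLetter_eq_liftLetter

variable {C : Set (Fin l → S)}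

theorem PropertyP.recursiveCode [DecidableEq F] (hP : PropertyP t inf C) :
    PropertyP t none (recursiveCode inf t α C) := by
  constructor
  · rintro _ ⟨⟨y, f⟩, ⟨hy, -⟩, rfl⟩
    simpa only [recursiveWord_eq_none] using hP.1 y hy
  · rintro _ ⟨⟨y, f⟩, ⟨hy, -⟩, rfl⟩ _ ⟨⟨y', f'⟩, ⟨hy', -⟩, rfl⟩ I hI hagree
    simp only [recursiveWord_eq_recursiveWord, ne_eq, recursiveWord_eq_none] at hagree
    obtain rfl : y = y' :=
      hP.2 y hy y' hy' I hI fun i hi => ⟨(hagree i hi).1.1, (hagree i hi).2⟩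
    obtain rfl : f = f' := Subtype.ext <| eq_of_projEval_eq α f.2 f'.2 I hI
      fun i hi => (hagree i hi).1.2 (hagree i hi).2
    rfl

theorem injOn_recursiveWord (hP : PropertyP t inf C) (hl : 2 * t - 1 ≤ l) :
    Set.InjOn (fun p : (Fin l → S) × degreeLT F t => recursiveWord inf t α p.1 p.2)
      (C ×ˢ Set.univ) := by
  rintro ⟨y, f⟩ ⟨(hy : y ∈ C), -⟩ ⟨y', f'⟩ - h
  have hagree i := recursiveWord_eq_recursiveWord.1 (congrFun h i)
  obtain rfl : y = y' := funext fun i => (hagree i).1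
  have hN := hP.le_card_nonspecial hy
  obtain rfl : f = f' := Subtype.ext <| eq_of_projEval_eq α f.2 f'.2 {i | y i ≠ inf}
    (by omega) fun i hi => (hagree i).2 (mem_filter.1 hi).2
  rfl

theorem ncard_recursiveCode [Finite F] (hP : PropertyP t inf C) (hl : 2 * t - 1 ≤ l) :
    (recursiveCode inf t α C).ncard = C.ncard * Nat.card F ^ t := by
  rw [recursiveCode, (injOn_recursiveWord hP hl).ncard_image, Set.ncard_prod,
    Set.ncard_univ, Nat.card_congr (degreeLTEquiv F t).toEquiv, Nat.card_fun, Nat.card_fin]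

end RecursiveConstruction

theorem frameproof_recursive_propertyP_general {l s t c r M m q : ℕ} (S : Type*) [Fintype S]
    [DecidableEq S] (hs : Fintype.card S = s) (inf : S) (C : Set (Fin l → S))
    (hC : IsFrameproof c C) (hP : PropertyP t inf C) (hM : C.ncard = M)
    (hm : ∃ p k : ℕ, p.Prime ∧ 0 < k ∧ m = p ^ k)
    (hml : l - 1 ≤ m) (hlt : 2 * t - 1 ≤ l)
    (hl : l = c * (t - 1) + r) (hr1 : t ≤ r)
    (hq : q = (s - 1) * m + 1) :
    ∃ (Q : Type) (_ : Fintype Q) (_ : DecidableEq Q), Fintype.card Q = q ∧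
      ∃ (C' : Set (Fin l → Q)) (inf' : Q), IsFrameproof c C' ∧
        C'.ncard = M * m ^ t ∧ PropertyP t inf' C' := by
  classical
  obtain ⟨p, k, hp, hk, rfl⟩ := hm
  have : Fact p.Prime := ⟨hp⟩
  let F := GaloisField p k
  let : Fintype F := Fintype.ofFinite F
  have hF : Nat.card F = p ^ k := GaloisField.card p k hk.ne'
  obtain ⟨α⟩ : Nonempty (Fin l ↪ Option F) := Function.Embedding.nonempty_of_card_le (by
    rw [Fintype.card_fin, Fintype.card_option, ← Nat.card_eq_fintype_card, hF]
    omega)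
  -- move the code to an alphabet in `Type`, so that the new alphabet is one too
  let e : S ≃ Fin s := (Fintype.equivFin S).trans (finCongr hs)
  have hP₂ := hP.image_comp e.injective
  refine ⟨_, inferInstance, inferInstance, ?_, recursiveCode (e inf) t α ((e ∘ ·) '' C), none,
    ?_, ?_, hP₂.recursiveCode⟩
  · rw [card_liftLetter_alphabet, Fintype.card_fin, ← Nat.card_eq_fintype_card, hF, hq]
  · rcases Nat.eq_zero_or_pos l with rfl | hl0
    · simp [hC.eq_empty, recursiveCode, isFrameproof_empty]
    · exact hP₂.recursiveCode.isFrameproof (by omega) hl0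
  · rw [ncard_recursiveCode hP₂ hlt, Set.ncard_image_of_injective _ e.injective.comp_left, hM,
      hF]

/-- The code resulting from the recursive construction also satisfies
Property P(t) (with a new special element). -/
theorem frameproof_recursive_propertyP {l s t c r M m q : ℕ} (S : Type*) [Fintype S]
    [DecidableEq S] (hs : Fintype.card S = s) (inf : S) (C : Set (Fin l → S))
    (hC : IsFrameproof c C) (hP : PropertyP t inf C) (hM : C.ncard = M)
    (hm : ∃ p k : ℕ, p.Prime ∧ 0 < k ∧ m = p ^ k)
    (hml : l - 1 ≤ m) (hlt : 2 * t - 1 ≤ l) (htc : t ≤ c)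
    (hl : l = c * (t - 1) + r) (hr1 : t ≤ r) (hr2 : r ≤ c)
    (hq : q = (s - 1) * m + 1) :
    ∃ (Q : Type) (_ : Fintype Q) (_ : DecidableEq Q), Fintype.card Q = q ∧
      ∃ (C' : Set (Fin l → Q)) (inf' : Q), IsFrameproof c C' ∧
        C'.ncard = M * m ^ t ∧ PropertyP t inf' C' :=
  frameproof_recursive_propertyP_general S hs inf C hC hP hM hm hml hlt hl hr1 hq
end

section
/- For every integer q ≡ 4 (mod 6), there exists a q-ary 3-frameproof code of length 5 with cardinality (5/3)(q-1)^2 + 1. -/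
open Finset

/-!
Write `q = 3s + 1` with `s` odd and use as alphabet an abelian group `A` of order `3s` together
with a symbol `∞`. Given a translation group `ψ(B)` of order `s` and base words `aᵢ` (`i ∈ I`,
`|I| = 3s`), the code consists of the all-`∞` word and the five cyclic shifts of
`(∞, aᵢ(1) + b, …, aᵢ(4) + b)` for `b ∈ ψ(B)`. If the triples
`(d₂ - d₁, aᵢ(d₂) - aᵢ(d₁), aᵢ(d₁) mod ψ(B))` determine `(i, d₁, d₂)`, two distinct codewords
agree in at most one finite position. Every codeword has at most one `∞`, so a codeword
descending from at most three codewords agrees with one of them in two finite positions by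
pigeonhole, and the code is 3-frameproof.

Writing `s = 3ᵏu` with `gcd(u, 6) = 1`, suitable data are products of a small system over `ℤ/3`
(or `ℤ/9` when `k = 1`) with families of the shape `0, 1, 2, 2 + T` on `𝔽₃²`, `𝔽₃³` and
multiplications on `ℤ/u`.
-/

open Function

section Frameproof

variable {l : ℕ} {F : Type*} [DecidableEq F]

theorem exists_lt_card_filter_eq_of_mem_desc {P : Finset (Fin l → F)} {x : Fin l → F}
    (hx : x ∈ desc (P : Set (Fin l → F))) (J : Finset (Fin l)) {m : ℕ} (hJ : #P * m < #J) :
    ∃ y ∈ P, m < #{i ∈ J | x i = y i} := by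
  choose f hfP hfx using hx
  obtain ⟨y, hy, hlt⟩ := exists_lt_card_fiber_of_mul_lt_card_of_maps_to (fun i _ => hfP i) hJ
  refine ⟨y, hy, hlt.trans_le (card_le_card fun i hi => ?_)⟩
  simp only [mem_filter] at hi ⊢
  exact ⟨hi.1, hi.2 ▸ hfx i⟩

variable {t : ℕ} {inf : F} {C : Set (Fin l → F)} {P : Finset (Fin l → F)}

theorem PropertyP.const_mem_of_mem_desc (hC : PropertyP t inf C)
    (hP : ↑P ⊆ insert (fun _ => inf) C) (hl : #P * (t - 1) < l)
    (hx : (fun _ => inf) ∈ desc (P : Set (Fin l → F))) : (fun _ => inf) ∈ P := by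
  by_contra hxP
  obtain ⟨y, hy, hlt⟩ := exists_lt_card_filter_eq_of_mem_desc hx univ (m := t - 1)
    (by rwa [card_univ, Fintype.card_fin])
  have hyC : y ∈ C := (hP hy).resolve_left (by rintro rfl; exact hxP hy)
  have := hC.1 y hyC
  simp only [eq_comm (a := inf)] at hlt
  omega

theorem PropertyP.mem_of_mem_desc (hC : PropertyP t inf C)
    (hP : ↑P ⊆ insert (fun _ => inf) C) (hl : #P * (t - 1) + (t - 1) < l) {x : Fin l → F}
    (hx : x ∈ desc (P : Set (Fin l → F))) (hxC : x ∈ C) : x ∈ P := by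
  have hJ : l - (t - 1) ≤ #{i | x i ≠ inf} := by
    have := hC.1 x hxC
    have := card_filter_add_card_filter_not (s := univ) (fun i => x i = inf)
    simp only [← ne_eq, card_univ, Fintype.card_fin] at this
    omega
  obtain ⟨y, hy, hlt⟩ := exists_lt_card_filter_eq_of_mem_desc hx {i | x i ≠ inf} (m := t - 1)
    (by omega)
  set I : Finset (Fin l) := {i ∈ {i | x i ≠ inf} | x i = y i}
  have hI : ∀ i ∈ I, x i = y i ∧ x i ≠ inf := fun i hi => by
    simp only [I, mem_filter] at hi
    exact ⟨hi.2, hi.1.2⟩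
  obtain ⟨i, hi⟩ := card_pos.1 (by omega : 0 < #I)
  have hyC : y ∈ C := (hP hy).resolve_left (by rintro rfl; exact (hI i hi).2 (hI i hi).1)
  rwa [hC.2 x hxC y hyC I (by omega) hI]

theorem PropertyP.isFrameproof_insert {c : ℕ} (hC : PropertyP t inf C)
    (hl : (c + 1) * (t - 1) < l) : IsFrameproof c (insert (fun _ => inf) C) := by
  intro P hP hPc
  have hPl : #P * (t - 1) + (t - 1) < l := by
    have := Nat.mul_le_mul_right (t - 1) hPc
    rw [add_mul, one_mul] at hl
    omega
  refine subset_antisymm (fun x ⟨hx, hxC⟩ => ?_) fun y hy => ⟨fun _ => ⟨y, hy, rfl⟩, hP hy⟩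
  rcases hxC with rfl | hxC
  · exact hC.const_mem_of_mem_desc hP (by omega) hx
  · exact hC.mem_of_mem_desc hP hPl hx hxC

theorem PropertyP.const_notMem (hC : PropertyP t inf C) (hl : t - 1 < l) :
    (fun _ => inf) ∉ C := fun h => by
  have := hC.1 _ h
  simp only [filter_true, card_univ, Fintype.card_fin] at this
  omega

theorem PropertyP.image_comp_s15 {G : Type*} [DecidableEq G] {f : F → G} (hf : Injective f)
    (hC : PropertyP t inf C) : PropertyP t (f inf) ((f ∘ ·) '' C) := by
  refine ⟨?_, ?_⟩
  · rintro _ ⟨x, hx, rfl⟩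
    simpa [hf.eq_iff] using hC.1 x hx
  · rintro _ ⟨x, hx, rfl⟩ _ ⟨y, hy, rfl⟩ I hI hxy
    rw [hC.2 x hx y hy I hI fun i hi => by simpa [hf.eq_iff] using hxy i hi]

end Frameproof

section CyclicCode

variable {n : ℕ} [NeZero n] {A B I Φ : Type*} [AddCommGroup A]

/-- `none` plays the role of the symbol `∞`. -/
def cyclicWord (ψ : B → A) (a : I → Fin n → A) (w : Fin n × B × I) : Fin n → Option A :=
  fun p => if p = w.1 then none else some (a w.2.2 (p - w.1) + ψ w.2.1)

/-- Makes distinct cyclic words agree in at most one finite position. -/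
structure IsSeparating (ψ : B → A) (φ : A → Φ) (a : I → Fin n → A) : Prop where
  injective : Injective ψ
  invariant : ∀ x b, φ (x + ψ b) = φ x
  injOn : Set.InjOn (fun x : I × Fin n × Fin n =>
      (x.2.2 - x.2.1, a x.1 x.2.2 - a x.1 x.2.1, φ (a x.1 x.2.1)))
    {x | x.2.1 ≠ 0 ∧ x.2.2 ≠ 0 ∧ x.2.1 ≠ x.2.2}

variable {ψ : B → A} {φ : A → Φ} {a : I → Fin n → A}

theorem IsSeparating.eq_of_cyclicWord_eq (h : IsSeparating ψ φ a) {w w' : Fin n × B × I}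
    {p₁ p₂ : Fin n} (hp : p₁ ≠ p₂)
    (h₁ : cyclicWord ψ a w p₁ = cyclicWord ψ a w' p₁) (hn₁ : cyclicWord ψ a w p₁ ≠ none)
    (h₂ : cyclicWord ψ a w p₂ = cyclicWord ψ a w' p₂) (hn₂ : cyclicWord ψ a w p₂ ≠ none) :
    w = w' := by
  obtain ⟨ρ, τ, i⟩ := w
  obtain ⟨ρ', τ', i'⟩ := w'
  have hρ₁ : p₁ ≠ ρ := by rintro rfl; simp [cyclicWord] at hn₁
  have hρ₂ : p₂ ≠ ρ := by rintro rfl; simp [cyclicWord] at hn₂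
  have hρ₁' : p₁ ≠ ρ' := by rintro rfl; exact hn₁ (h₁.trans (by simp [cyclicWord]))
  have hρ₂' : p₂ ≠ ρ' := by rintro rfl; exact hn₂ (h₂.trans (by simp [cyclicWord]))
  simp only [cyclicWord, hρ₁, hρ₂, hρ₁', hρ₂', if_false, Option.some.injEq] at h₁ h₂
  have hmem : ∀ ρ, p₁ ≠ ρ → p₂ ≠ ρ → p₁ - ρ ≠ 0 ∧ p₂ - ρ ≠ 0 ∧ p₁ - ρ ≠ p₂ - ρ :=
    fun ρ h₁ h₂ => ⟨sub_ne_zero.2 h₁, sub_ne_zero.2 h₂, fun e => hp (sub_left_injective e)⟩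
  have key := @h.injOn (i, p₁ - ρ, p₂ - ρ) (hmem ρ hρ₁ hρ₂) (i', p₁ - ρ', p₂ - ρ')
    (hmem ρ' hρ₁' hρ₂') <| Prod.ext (by simp only [sub_sub_sub_cancel_right]) <| Prod.ext
    (by simp only; rw [← add_sub_add_right_eq_sub _ _ (ψ τ), h₁, h₂, add_sub_add_right_eq_sub])
    (by simp only; rw [← h.invariant _ τ, h₁, h.invariant])
  simp only [Prod.mk.injEq, sub_right_inj] at key
  obtain ⟨rfl, rfl, -⟩ := key
  rw [h.injective (add_left_cancel h₁)]

theorem IsSeparating.injective_cyclicWord (h : IsSeparating ψ φ a) (hn : 3 ≤ n) :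
    Injective (cyclicWord ψ a) := by
  intro w w' hw
  have hne : ∀ p ∈ univ.erase w.1, cyclicWord ψ a w p ≠ none := fun p hp => by
    simp [cyclicWord, ne_of_mem_erase hp]
  have hcard : 1 < #(univ.erase w.1) := by
    rw [card_erase_of_mem (mem_univ _), card_univ, Fintype.card_fin]; omega
  obtain ⟨p₁, h₁, p₂, h₂, hp⟩ := one_lt_card.1 hcard
  exact h.eq_of_cyclicWord_eq hp (congrFun hw p₁) (hne p₁ h₁) (congrFun hw p₂) (hne p₂ h₂)

theorem IsSeparating.propertyP [DecidableEq A] (h : IsSeparating ψ φ a) :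
    PropertyP 2 none (Set.range (cyclicWord ψ a)) := by
  refine ⟨?_, ?_⟩
  · rintro _ ⟨w, rfl⟩
    calc #{p | cyclicWord ψ a w p = none} ≤ #{w.1} :=
          card_le_card fun p => by simp +contextual [cyclicWord]
      _ = 2 - 1 := rfl
  · rintro _ ⟨w, rfl⟩ _ ⟨w', rfl⟩ J hJ hJw
    obtain ⟨p₁, h₁, p₂, h₂, hp⟩ := one_lt_card.1 hJ
    rw [h.eq_of_cyclicWord_eq hp (hJw p₁ h₁).1 (hJw p₁ h₁).2 (hJw p₂ h₂).1 (hJw p₂ h₂).2]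

theorem IsSeparating.exists_frameproof [Fintype A] [Fintype B] [Fintype I]
    (h : IsSeparating ψ φ a) {c q : ℕ} (hc : c + 1 < n) (hn : 3 ≤ n)
    (hq : Fintype.card A + 1 = q) :
    ∃ C : Set (Fin n → Fin q), IsFrameproof c C ∧
      C.ncard = n * Fintype.card B * Fintype.card I + 1 := by
  classical
  let e : Option A ≃ Fin q := Fintype.equivFinOfCardEq (by rw [Fintype.card_option, hq])
  have hP := h.propertyP.image_comp_s15 e.injective
  refine ⟨insert (fun _ => e none) ((e ∘ ·) '' Set.range (cyclicWord ψ a)),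
    hP.isFrameproof_insert (by simpa using hc), ?_⟩
  rw [Set.ncard_insert_of_notMem (hP.const_notMem (by omega)),
    Set.ncard_image_of_injective _ e.injective.comp_left,
    Set.ncard_range_of_injective (h.injective_cyclicWord hn), Nat.card_eq_fintype_card,
    Fintype.card_prod, Fintype.card_prod, Fintype.card_fin, mul_assoc]

end CyclicCode

section DiffInjective

variable {n : ℕ} [NeZero n] {A I : Type*} [AddCommGroup A]

def DiffInjective (g : I → Fin n → A) : Prop :=
  ∀ d₁ d₂ : Fin n, d₁ ≠ 0 → d₂ ≠ 0 → d₁ ≠ d₂ → Injective fun i => g i d₂ - g i d₁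

theorem DiffInjective.prod {A' I' : Type*} [AddCommGroup A'] {g : I → Fin n → A}
    {g' : I' → Fin n → A'} (hg : DiffInjective g) (hg' : DiffInjective g') :
    DiffInjective fun (i : I × I') d => (g i.1 d, g' i.2 d) :=
  fun d₁ d₂ h₁ h₂ h => (hg d₁ d₂ h₁ h₂ h).prodMap (hg' d₁ d₂ h₁ h₂ h)

theorem DiffInjective.pi {ι : Type*} {g : I → Fin n → A} (hg : DiffInjective g) :
    DiffInjective fun (i : ι → I) d x => g (i x) d :=
  fun d₁ d₂ h₁ h₂ h => Injective.piMap fun _ => hg d₁ d₂ h₁ h₂ h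

theorem diffInjective_mul {R : Type*} [CommRing R] {c : Fin n → R}
    (hc : ∀ d₁ d₂ : Fin n, d₁ ≠ 0 → d₂ ≠ 0 → d₁ ≠ d₂ → IsUnit (c d₂ - c d₁)) :
    DiffInjective fun (k : R) d => c d * k :=
  fun d₁ d₂ h₁ h₂ h k k' hk => (hc d₁ d₂ h₁ h₂ h).mul_left_cancel (by simpa [sub_mul] using hk)

theorem IsSeparating.prod {B Φ J M : Type*} [AddCommGroup M] {ψ : B → A} {φ : A → Φ}
    {a : I → Fin n → A} {g : J → Fin n → M} (h : IsSeparating ψ φ a) (hg : DiffInjective g) :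
    IsSeparating (Prod.map ψ id) (φ ∘ Prod.fst) fun (i : I × J) d => (a i.1 d, g i.2 d) := by
  refine ⟨h.injective.prodMap injective_id, fun x b => h.invariant x.1 b.1, ?_⟩
  rintro ⟨⟨i, j⟩, d₁, d₂⟩ hx ⟨⟨i', j'⟩, d₁', d₂'⟩ hx' heq
  simp only [Prod.mk_sub_mk, comp_apply, Prod.mk.injEq] at heq
  obtain ⟨hd, ⟨ha, hg'⟩, hφ⟩ := heq
  have := @h.injOn (i, d₁, d₂) hx (i', d₁', d₂') hx' (by simp only [hd, ha, hφ])
  simp only [Prod.mk.injEq] at this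
  obtain ⟨rfl, rfl, rfl⟩ := this
  rw [hg d₁ d₂ hx.1 hx.2.1 hx.2.2 hg']

end DiffInjective

/- The differences of `0, 1, 2, 2 + T` are `±1, ±2, ±T, ±(1 + T), ±(2 + T)`, all invertible
because `T` has no eigenvalue in `𝔽₃` (characteristic polynomials `X² + 1` and `X³ - X + 1`). -/

def rot (v : ZMod 3 × ZMod 3) : ZMod 3 × ZMod 3 := (-v.2, v.1)

theorem diffInjective_rot :
    DiffInjective fun (v : ZMod 3 × ZMod 3) => ![0, 0, v, v + v, v + v + rot v] := by
  unfold DiffInjective; decide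

def companion (v : ZMod 3 × ZMod 3 × ZMod 3) : ZMod 3 × ZMod 3 × ZMod 3 :=
  (v.2.1, v.2.2, v.2.1 - v.1)

theorem diffInjective_companion :
    DiffInjective fun (v : ZMod 3 × ZMod 3 × ZMod 3) =>
      ![0, 0, v, v + v, v + v + companion v] := by
  unfold DiffInjective; decide

theorem isSeparating_zmod3 :
    IsSeparating (fun _ : Unit => (0 : ZMod 3)) id
      fun (r : ZMod 3) d => ![0, 0, 1, 1, 0] d + r := by
  refine ⟨injective_of_subsingleton _, fun x _ => by simp, ?_⟩
  unfold Set.InjOn; decide +kernel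

/-- Covers `s = 3u`: a group of order `3` carries no `DiffInjective` family on `Fin 5`. -/
def table9 : Fin 9 → Fin 5 → ZMod 9 :=
  ![![0, 0, 2, 1, 2], ![0, 0, 8, 8, 5], ![0, 1, 1, 5, 8], ![0, 2, 0, 5, 0], ![0, 2, 7, 3, 6],
    ![0, 2, 3, 7, 1], ![0, 1, 0, 6, 4], ![0, 0, 1, 3, 3], ![0, 1, 8, 1, 7]]

theorem isSeparating_table9 :
    IsSeparating (fun t : ZMod 3 => 3 * (t.val : ZMod 9)) (fun x : ZMod 9 => (x.val : ZMod 3))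
      table9 := by
  refine ⟨by decide, by decide, ?_⟩
  unfold Set.InjOn; decide +kernel

theorem diffInjective_zmod {u : ℕ} [NeZero u] (hu : Nat.Coprime 6 u) :
    DiffInjective fun (k : ZMod u) d => ((![0, 0, 1, 2, 4] d : ℤ) : ZMod u) * k := by
  have h6 : IsUnit ((6 : ℤ) : ZMod u) := by exact_mod_cast (ZMod.isUnit_iff_coprime 6 u).2 hu
  refine diffInjective_mul fun d₁ d₂ h₁ h₂ h =>
    isUnit_of_dvd_unit (y := ((6 * 6 : ℤ) : ZMod u)) ?_ (by rw [Int.cast_mul]; exact h6.mul h6)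
  rw [← Int.cast_sub]
  exact Int.cast_dvd_cast _ _ (by revert d₁ d₂; decide)

theorem exists_eq_two_mul_add_three_mul_of_ne_one {k : ℕ} (hk : k ≠ 1) :
    ∃ j e, k = 2 * j + 3 * e := by
  rcases Nat.even_or_odd' k with ⟨m, rfl | rfl⟩
  · exact ⟨m, 0, by ring⟩
  · exact ⟨m - 1, 1, by omega⟩

theorem exists_frameproof_of_odd {s : ℕ} (hs : Odd s) :
    ∃ C : Set (Fin 5 → Fin (3 * s + 1)), IsFrameproof 3 C ∧ C.ncard = 15 * s ^ 2 + 1 := by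
  obtain ⟨k, u, hu3, rfl⟩ := Nat.exists_eq_pow_mul_and_not_dvd hs.pos.ne' 3 (by norm_num)
  have hu : Nat.Coprime 6 u :=
    Nat.Coprime.mul_left (Nat.coprime_two_left.2 (Nat.Odd.of_mul_right hs))
      ((Nat.Prime.coprime_iff_not_dvd Nat.prime_three).2 hu3)
  have : NeZero u := ⟨by rintro rfl; simp at hs⟩
  rcases eq_or_ne k 1 with rfl | hk
  · obtain ⟨C, hC, hcard⟩ := (isSeparating_table9.prod (diffInjective_zmod hu)).exists_frameproof
      (c := 3) (q := 3 * (3 ^ 1 * u) + 1) (by norm_num) (by norm_num) (by simp; ring)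
    exact ⟨C, hC, by rw [hcard]; simp; ring⟩
  · obtain ⟨j, e, rfl⟩ := exists_eq_two_mul_add_three_mul_of_ne_one hk
    obtain ⟨C, hC, hcard⟩ := (isSeparating_zmod3.prod
      (((diffInjective_rot.pi (ι := Fin j)).prod (diffInjective_companion.pi (ι := Fin e))).prod
        (diffInjective_zmod hu))).exists_frameproof
      (c := 3) (q := 3 * (3 ^ (2 * j + 3 * e) * u) + 1) (by norm_num) (by norm_num)
      (by simp [pow_add, pow_mul])
    exact ⟨C, hC, by rw [hcard]; simp [pow_add, pow_mul]; ring⟩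

/-- For every `q ≡ 4 (mod 6)` there is a `q`-ary 3-frameproof code of length 5
with cardinality `(5/3)(q-1)^2 + 1` (stated multiplied through by 3). -/
theorem exists_frameproof_c3_l5 (q : ℕ) (hq : q % 6 = 4) :
    ∃ C : Set (Fin 5 → Fin q), IsFrameproof 3 C ∧
      3 * C.ncard = 5 * (q - 1) ^ 2 + 3 := by
  obtain ⟨s, hs, rfl⟩ : ∃ s, Odd s ∧ q = 3 * s + 1 := ⟨q / 3, ⟨q / 6, by omega⟩, by omega⟩
  obtain ⟨C, hC, hcard⟩ := exists_frameproof_of_odd hs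
  exact ⟨C, hC, by rw [hcard, Nat.add_sub_cancel]; ring⟩
end

section
/- Let c ≥ 2 be an integer such that c+1 is a prime power, and let m ≥ c+1 be any prime power. Then there exists a (cm+1)-ary c-frameproof code of length c+2 with cardinality ((c+2)/c)(cm+1-1)^2 = (c+2)(c)m^2. -/
open Finset

/-!
Index the coordinates by the projective line `Option K` over a field `K` with `c + 1` elements.
A nonzero pair `v = (s, b)` gives the doubly extended Reed–Solomon word `∞ ↦ s, x ↦ s x + b`,
which vanishes at most once, and any two coordinates determine `v`. Its nonzero entries are
refined by the values at labelled points of an affine map `a` over a field `L` with `m ≥ c + 1`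
elements, and its zero becomes a special symbol. The resulting `c (c + 2) m²` words have
Property P(2): each has at most one special coordinate, and two of them agreeing on two ordinary
coordinates coincide. A descendant of `c` codewords has `c + 1` ordinary coordinates, so by
pigeonhole one parent supplies two of them, and the descendant is that parent.
-/

theorem PropertyP.isFrameproof_s17 {l : ℕ} {S : Type*} [DecidableEq S] {t c : ℕ} {inf : S}
    {C : Set (Fin l → S)} (hC : PropertyP t inf C) (hl : (c + 1) * (t - 1) < l) :
    IsFrameproof c C := by
  intro P hPC hPc
  refine Set.Subset.antisymm ?_ fun y hy => ⟨fun i => ⟨y, hy, rfl⟩, hPC hy⟩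
  rintro x ⟨hx, hxC⟩
  choose parent hparentP hparent using hx
  set T := univ.filter fun i => x i ≠ inf
  have hT : l ≤ (t - 1) + T.card := by
    have := card_filter_add_card_filter_not (s := univ) fun i => x i = inf
    rw [card_univ, Fintype.card_fin] at this
    linarith [hC.1 x hxC]
  have hPT : P.card * (t - 1) < T.card := by
    have := Nat.mul_le_mul_right (t - 1) hPc
    rw [add_one_mul] at hl
    omega
  obtain ⟨y, hyP, hy⟩ :=
    exists_lt_card_fiber_of_mul_lt_card_of_maps_to (fun i _ => hparentP i) hPT
  have hxy : x = y := hC.2 x hxC y (hPC hyP) (T.filter (parent · = y)) (by omega) fun i hi => by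
    obtain ⟨hiT, rfl⟩ := mem_filter.1 hi
    exact ⟨hparent i, (mem_filter.1 hiT).2⟩
  exact hxy ▸ hyP

section ReedSolomon

variable {F : Type*} [Field F]

def rsEval (v : F × F) : Option F → F
  | none => v.1
  | some x => v.1 * x + v.2

@[simp]
lemma rsEval_zero (i : Option F) : rsEval 0 i = 0 := by
  cases i <;> simp [rsEval]

lemma eq_of_rsEval_eq_of_ne {v w : F × F} {i j : Option F} (hij : i ≠ j)
    (hi : rsEval v i = rsEval w i) (hj : rsEval v j = rsEval w j) : v = w := by
  rcases i with _ | x <;> rcases j with _ | y <;> simp only [rsEval] at hi hj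
  · exact absurd rfl hij
  · exact Prod.ext hi (add_left_cancel (hi ▸ hj))
  · exact Prod.ext hj (add_left_cancel (hj ▸ hi))
  · have hxy : x - y ≠ 0 := sub_ne_zero.2 fun h => hij (h ▸ rfl)
    have hs : v.1 = w.1 := mul_left_cancel₀ hxy (by linear_combination hi - hj)
    exact Prod.ext hs (add_left_cancel (hs ▸ hi))

lemma eq_of_rsEval_eq_zero {v : F × F} (hv : v ≠ 0) {i j : Option F} (hi : rsEval v i = 0)
    (hj : rsEval v j = 0) : i = j := by
  by_contra hij
  exact hv (eq_of_rsEval_eq_of_ne hij (by simp [hi]) (by simp [hj]))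

lemma exists_ne_rsEval_ne_zero {v : F × F} (hv : v ≠ 0) :
    ∃ i j : Option F, i ≠ j ∧ rsEval v i ≠ 0 ∧ rsEval v j ≠ 0 := by
  by_cases h : rsEval v none = 0
  · exact ⟨some 0, some 1, by simp, fun h0 => by simpa using eq_of_rsEval_eq_zero hv h h0,
      fun h1 => by simpa using eq_of_rsEval_eq_zero hv h h1⟩
  by_cases h₀ : rsEval v (some 0) = 0
  · exact ⟨none, some 1, by simp, h, fun h1 => by simpa using eq_of_rsEval_eq_zero hv h₀ h1⟩
  · exact ⟨none, some 0, by simp, h, h₀⟩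

/-- An affine coordinate on the projective line minus the zero of `rsEval v`: the point at
infinity takes over the label of that zero. -/
def rsLabel (v : F × F) : Option F → F
  | none => -v.2 / v.1
  | some x => x

lemma rsLabel_injOn (v : F × F) : Set.InjOn (rsLabel v) {i | rsEval v i ≠ 0} := by
  rintro (_ | x) hi (_ | y) hj h <;> simp only [Set.mem_ofPred_eq, rsEval, rsLabel] at hi hj h
  · rfl
  · exact absurd (by rw [← h]; field_simp; ring) hj
  · exact absurd (by rw [h]; field_simp; ring) hi
  · rw [h]

end ReedSolomon

section Code

variable {K L : Type*} [Field K] [Field L] [DecidableEq K] (φ : K ↪ L)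

def codeSymbol (v : K × K) (a : L × L) (k : Option K) : Option (Kˣ × L) :=
  if h : rsEval v k = 0 then none else some (Units.mk0 _ h, rsEval a (some (φ (rsLabel v k))))

lemma codeSymbol_eq_none_iff {v : K × K} {a : L × L} {k : Option K} :
    codeSymbol φ v a k = none ↔ rsEval v k = 0 := by
  unfold codeSymbol
  split_ifs with h <;> simp [h]

lemma eq_of_codeSymbol_eq {v w : K × K} {a b : L × L} {i j : Option K} (hij : i ≠ j)
    (hi : rsEval v i ≠ 0) (hj : rsEval v j ≠ 0)
    (h₁ : codeSymbol φ v a i = codeSymbol φ w b i) (h₂ : codeSymbol φ v a j = codeSymbol φ w b j) :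
    v = w ∧ a = b := by
  have hi' : rsEval w i ≠ 0 := by
    rwa [Ne, ← codeSymbol_eq_none_iff φ (a := b), ← h₁, codeSymbol_eq_none_iff]
  have hj' : rsEval w j ≠ 0 := by
    rwa [Ne, ← codeSymbol_eq_none_iff φ (a := b), ← h₂, codeSymbol_eq_none_iff]
  simp only [codeSymbol, dif_neg hi, dif_neg hj, dif_neg hi', dif_neg hj', Option.some.injEq,
    Prod.mk.injEq, Units.ext_iff, Units.val_mk0] at h₁ h₂
  obtain rfl : v = w := eq_of_rsEval_eq_of_ne hij h₁.1 h₂.1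
  refine ⟨rfl, eq_of_rsEval_eq_of_ne ?_ h₁.2 h₂.2⟩
  exact fun h => hij (rsLabel_injOn v hi hj (φ.injective (Option.some_injective _ h)))

variable {l : ℕ} {S : Type*} (e : Fin l ≃ Option K) (g : Option (Kˣ × L) ≃ S)

def codeword (x : {v : K × K // v ≠ 0} × (L × L)) (i : Fin l) : S :=
  g (codeSymbol φ x.1 x.2 (e i))

lemma codeword_injective : Function.Injective (codeword φ e g) := by
  rintro ⟨v, a⟩ ⟨w, b⟩ h
  obtain ⟨i, j, hij, hi, hj⟩ := exists_ne_rsEval_ne_zero v.2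
  have hsymbol (k : Option K) : codeSymbol φ v a k = codeSymbol φ w b k := by
    simpa [codeword] using congrFun h (e.symm k)
  obtain ⟨hvw, rfl⟩ := eq_of_codeSymbol_eq φ hij hi hj (hsymbol i) (hsymbol j)
  rw [Subtype.ext hvw]

lemma propertyP_range_codeword [DecidableEq S] :
    PropertyP 2 (g none) (Set.range (codeword φ e g)) := by
  constructor
  · rintro _ ⟨⟨v, a⟩, rfl⟩
    refine card_le_one.2 fun i hi j hj => e.injective (eq_of_rsEval_eq_zero v.2 ?_ ?_)
    · simpa [codeword, codeSymbol_eq_none_iff] using (mem_filter.1 hi).2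
    · simpa [codeword, codeSymbol_eq_none_iff] using (mem_filter.1 hj).2
  · rintro _ ⟨⟨v, a⟩, rfl⟩ _ ⟨⟨w, b⟩, rfl⟩ I hI hagree
    obtain ⟨i, hi, j, hj, hij⟩ := one_lt_card.1 hI
    have hne (k : Fin l) (hk : k ∈ I) : rsEval v.1 (e k) ≠ 0 := by
      simpa [codeword, codeSymbol_eq_none_iff] using (hagree k hk).2
    have hsymbol (k : Fin l) (hk : k ∈ I) :
        codeSymbol φ v a (e k) = codeSymbol φ w b (e k) := g.injective (hagree k hk).1
    obtain ⟨hvw, rfl⟩ := eq_of_codeSymbol_eq φ (e.injective.ne hij) (hne i hi) (hne j hj)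
      (hsymbol i hi) (hsymbol j hj)
    rw [Subtype.ext hvw]

end Code

theorem exists_frameproof_of_finite_fields {K L : Type*} [Field K] [Field L] [Fintype K]
    [Fintype L] {c m : ℕ} (hK : Fintype.card K = c + 1) (hL : Fintype.card L = m)
    (hcm : c + 1 ≤ m) :
    ∃ C : Set (Fin (c + 2) → Fin (c * m + 1)),
      IsFrameproof c C ∧ C.ncard = (c + 2) * c * m ^ 2 := by
  subst hL
  classical
  obtain ⟨φ⟩ := Function.Embedding.nonempty_of_card_le (hK ▸ hcm)
  let e : Fin (c + 2) ≃ Option K := Fintype.equivOfCardEq (by simp [hK])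
  let g : Option (Kˣ × L) ≃ Fin (c * Fintype.card L + 1) :=
    Fintype.equivOfCardEq (by simp [Fintype.card_units, hK])
  refine ⟨_, (propertyP_range_codeword φ e g).isFrameproof_s17 (by omega), ?_⟩
  have hpairs : Fintype.card {v : K × K // v ≠ 0} = (c + 2) * c := by
    rw [Fintype.card_subtype_compl, Fintype.card_subtype_eq, Fintype.card_prod, hK]
    exact Nat.sub_eq_of_eq_add (by ring)
  rw [Set.ncard_range_of_injective (codeword_injective φ e g), Nat.card_eq_fintype_card,
    Fintype.card_prod, hpairs, Fintype.card_prod]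
  ring

theorem exists_frameproof_c_l_c2_general (c m : ℕ)
    (hc1 : ∃ p k : ℕ, p.Prime ∧ 0 < k ∧ c + 1 = p ^ k)
    (hm : ∃ p k : ℕ, p.Prime ∧ 0 < k ∧ m = p ^ k) (hcm : c + 1 ≤ m) :
    ∃ C : Set (Fin (c + 2) → Fin (c * m + 1)),
      IsFrameproof c C ∧ C.ncard = (c + 2) * c * m ^ 2 := by
  obtain ⟨p, k, hp, hk, hck⟩ := hc1
  obtain ⟨q, j, hq, hj, rfl⟩ := hm
  have := Fact.mk hp
  have := Fact.mk hq
  let := Fintype.ofFinite (GaloisField p k)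
  let := Fintype.ofFinite (GaloisField q j)
  have hK : Fintype.card (GaloisField p k) = c + 1 := by
    rw [← Nat.card_eq_fintype_card, GaloisField.card p k hk.ne', hck]
  have hL : Fintype.card (GaloisField q j) = q ^ j := by
    rw [← Nat.card_eq_fintype_card, GaloisField.card q j hj.ne']
  exact exists_frameproof_of_finite_fields hK hL hcm

/-- If `c + 1` is a prime power and `m ≥ c + 1` is a prime power, there is a
`(cm+1)`-ary `c`-frameproof code of length `c + 2` of cardinality
`((c+2)/c)(cm)^2 = (c+2) * c * m^2`. -/
theorem exists_frameproof_c_l_c2 (c m : ℕ) (hc : 2 ≤ c)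
    (hc1 : ∃ p k : ℕ, p.Prime ∧ 0 < k ∧ c + 1 = p ^ k)
    (hm : ∃ p k : ℕ, p.Prime ∧ 0 < k ∧ m = p ^ k) (hcm : c + 1 ≤ m) :
    ∃ C : Set (Fin (c + 2) → Fin (c * m + 1)),
      IsFrameproof c C ∧ C.ncard = (c + 2) * c * m ^ 2 :=
  exists_frameproof_c_l_c2_general c m hc1 hm hcm
end
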